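/- Let n be a positive integer, let c > 0 be a real number with c·n ≤ 2n/5, and let H₁ and H₂ be graphs on the same vertex set V with |V| = n. Suppose that H₁ is a (c·n, 2)-expander and that for every pair of disjoint sets X, Y ⊆ V with |X| = |Y| = ⌈c·n⌉ there is an edge of H₂ with one endpoint in X and one endpoint in Y. Then the union graph H₁ ∪ H₂ is an (n/5, 2)-expander. -/

import Mathlib

open MeasureTheory Filter

noncomputable def bernoulliMeasure (p : ℝ) : Measure Bool :=
  (PMF.bernoulli (min (Real.toNNReal p) 1) (min_le_right _ _)).toMeasure

noncomputable def gnp (n : ℕ) (p : ℝ) : Measure (Sym2 (Fin n) → Bool) :=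
  Measure.pi fun _ => bernoulliMeasure p

def graphOf {n : ℕ} (ω : Sym2 (Fin n) → Bool) : SimpleGraph (Fin n) where
  Adj u v := u ≠ v ∧ ω s(u, v) = true
  symm := by
    refine ⟨fun u v h => ?_⟩
    exact ⟨h.1.symm, by rw [Sym2.eq_swap]; exact h.2⟩
  loopless := by
    refine ⟨fun u h => ?_⟩
    exact h.1 rfl

instance {n : ℕ} (ω : Sym2 (Fin n) → Bool) : DecidableRel (graphOf ω).Adj :=
  fun u v => inferInstanceAs (Decidable (u ≠ v ∧ ω s(u, v) = true))

/-- `e_G(A)`: the number of edges with both endpoints in `A`. -/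
def edgesWithin {n : ℕ} (ω : Sym2 (Fin n) → Bool) (A : Finset (Fin n)) : ℕ :=
  ((graphOf ω).edgeFinset ∩ A.sym2).card

/-- `e_G(X,Y)`: the number of edges with one endpoint in `X` and one in `Y`. -/
def edgesBetween {n : ℕ} (ω : Sym2 (Fin n) → Bool) (X Y : Finset (Fin n)) : ℕ :=
  ((graphOf ω).edgeFinset.filter fun e => ∃ x ∈ X, ∃ y ∈ Y, e = s(x, y)).card

/-- `X_i`: the number of vertices of degree exactly `i`. -/
def degCount {n : ℕ} (ω : Sym2 (Fin n) → Bool) (i : ℕ) : ℕ :=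
  (Finset.univ.filter fun v => (graphOf ω).degree v = i).card

/-- `μ_i = E[X_i]`. -/
noncomputable def muDeg (n : ℕ) (p : ℝ) (i : ℕ) : ℝ :=
  ∫ ω, (degCount ω i : ℝ) ∂(gnp n p)

/-- Outer neighbourhood of a vertex set. -/
def outerNbhd {V : Type*} (G : SimpleGraph V) (U : Set V) : Set V :=
  {v | v ∉ U ∧ ∃ u ∈ U, G.Adj u v}

/-- `G` is a `(t,k)`-expander. -/
def IsExpander {V : Type*} (G : SimpleGraph V) (t k : ℝ) : Prop :=
  ∀ U : Set V, (U.ncard : ℝ) ≤ t → k * U.ncard ≤ ((outerNbhd G U).ncard : ℝ)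

/-- Length of a longest path in `G`. -/
noncomputable def longestPathLength {V : Type*} (G : SimpleGraph V) : ℕ :=
  sSup {l : ℕ | ∃ (u v : V) (p : G.Walk u v), p.IsPath ∧ p.length = l}

/-- `e` is a booster for `G`. -/
def IsBooster {V : Type*} [Fintype V] [DecidableEq V] (G : SimpleGraph V) (e : Sym2 V) : Prop :=
  ¬ e.IsDiag ∧ e ∉ G.edgeSet ∧
    ((G ⊔ SimpleGraph.fromEdgeSet {e}).IsHamiltonian ∨
      longestPathLength G < longestPathLength (G ⊔ SimpleGraph.fromEdgeSet {e}))

/-- The set of boosters of `G`. -/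
def boosters {V : Type*} [Fintype V] [DecidableEq V] (G : SimpleGraph V) : Set (Sym2 V) :=
  {e | IsBooster G e}

/-!
Small sets expand in `H₁` already. For a set `U` with `cn < |U| ≤ n/5`, the vertices outside
`U ∪ N(U)` cannot contain `⌈cn⌉` of them: otherwise `H₂` would join them to `⌈cn⌉` vertices of
`U`, putting one of them into `N(U)`. Hence `|N(U)| > n - |U| - cn ≥ 4n/5 - 2n/5 ≥ 2|U|`.
-/

variable {V : Type*}

def JoinsDisjointSets (G : SimpleGraph V) (m : ℕ) : Prop :=
  ∀ X Y : Set V, Disjoint X Y → X.ncard = m → Y.ncard = m → ∃ x ∈ X, ∃ y ∈ Y, G.Adj x y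

theorem JoinsDisjointSets.mono {G G' : SimpleGraph V} {m : ℕ} (hGG' : G ≤ G')
    (hG : JoinsDisjointSets G m) : JoinsDisjointSets G' m := by
  intro X Y hXY hX hY
  obtain ⟨x, hx, y, hy, hxy⟩ := hG X Y hXY hX hY
  exact ⟨x, hx, y, hy, hGG' hxy⟩

theorem outerNbhd_mono {G G' : SimpleGraph V} (hGG' : G ≤ G') (U : Set V) :
    outerNbhd G U ⊆ outerNbhd G' U := by
  rintro v ⟨hvU, u, huU, huv⟩
  exact ⟨hvU, u, huU, hGG' huv⟩

theorem IsExpander.mono [Finite V] {G G' : SimpleGraph V} {t k : ℝ} (hGG' : G ≤ G')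
    (hG : IsExpander G t k) : IsExpander G' t k := by
  intro U hU
  refine (hG U hU).trans ?_
  exact_mod_cast Set.ncard_le_ncard (outerNbhd_mono hGG' U)

theorem ncard_compl_union_outerNbhd_lt [Finite V] {G : SimpleGraph V} {m : ℕ}
    (hG : JoinsDisjointSets G m) {U : Set V} (hU : m ≤ U.ncard) :
    (U ∪ outerNbhd G U)ᶜ.ncard < m := by
  by_contra! hW
  obtain ⟨X, hXU, hX⟩ := Set.exists_subset_card_eq hU
  obtain ⟨Y, hYW, hY⟩ := Set.exists_subset_card_eq hW
  have hXY : Disjoint X Y :=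
    Set.disjoint_left.mpr fun v hvX hvY => hYW hvY (Or.inl (hXU hvX))
  obtain ⟨x, hx, y, hy, hxy⟩ := hG X Y hXY hX hY
  have hyU : y ∉ U := fun hyU => hYW hy (Or.inl hyU)
  exact hYW hy (Or.inr ⟨hyU, x, hXU hx, hxy⟩)

theorem stmt_17_general (n : ℕ) (c : ℝ)
    (hcn : c * n ≤ 2 * n / 5)
    (H₁ H₂ : SimpleGraph (Fin n))
    (h₁ : IsExpander H₁ (c * n) 2)
    (h₂ : ∀ X Y : Set (Fin n), Disjoint X Y → X.ncard = ⌈c * (n : ℝ)⌉₊ →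
      Y.ncard = ⌈c * (n : ℝ)⌉₊ → ∃ x ∈ X, ∃ y ∈ Y, H₂.Adj x y) :
    IsExpander (H₁ ⊔ H₂) ((n : ℝ) / 5) 2 := by
  intro U hU
  by_cases hsmall : (U.ncard : ℝ) ≤ c * n
  · exact h₁.mono le_sup_left U hsmall
  set N := outerNbhd (H₁ ⊔ H₂) U
  have hW : ((U ∪ N)ᶜ.ncard : ℝ) < c * n := Nat.lt_ceil.mp <|
    ncard_compl_union_outerNbhd_lt (JoinsDisjointSets.mono le_sup_right h₂)
      (Nat.ceil_le.mpr (not_le.mp hsmall).le)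
  have hcompl : ((U ∪ N).ncard : ℝ) + (U ∪ N)ᶜ.ncard = n := by
    exact_mod_cast (Set.ncard_add_ncard_compl (U ∪ N)).trans (Nat.card_fin n)
  have hunion : ((U ∪ N).ncard : ℝ) ≤ U.ncard + N.ncard := by
    exact_mod_cast Set.ncard_union_le U N
  linarith

/-- a `(cn, 2)`-expander together with a graph joining all pairs of
disjoint `⌈cn⌉`-sets is an `(n/5, 2)`-expander. -/
theorem stmt_17 (n : ℕ) (hn : 1 ≤ n) (c : ℝ) (hc : 0 < c)
    (hcn : c * n ≤ 2 * n / 5)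
    (H₁ H₂ : SimpleGraph (Fin n))
    (h₁ : IsExpander H₁ (c * n) 2)
    (h₂ : ∀ X Y : Set (Fin n), Disjoint X Y → X.ncard = ⌈c * (n : ℝ)⌉₊ →
      Y.ncard = ⌈c * (n : ℝ)⌉₊ → ∃ x ∈ X, ∃ y ∈ Y, H₂.Adj x y) :
    IsExpander (H₁ ⊔ H₂) ((n : ℝ) / 5) 2 :=
  stmt_17_general n c hcn H₁ H₂ h₁ h₂
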